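/- arXiv:2408.02150 — 5 statements merged into one kernel-verified Lean document; each statement's English description precedes it below -/
import Mathlib

section
/- Let X and U be Banach spaces, τ > 0, and F : [0,τ] → L(U,X) a function of bounded semivariation. Then for every x' ∈ X' with ‖x'‖ ≤ 1, the function t ↦ F(t)' x' (taking values in U') has bounded variation on [0,τ], and Var₀^τ(F(·)'x') ≤ 2·SV₀^τ(F). -/
open scoped ENNReal

/-!
Fix a partition with increments `Aᵢ = F(tᵢ) - F(tᵢ₋₁)`. For each `i` pick `vᵢ` in the unit ball
with `x'(Aᵢ vᵢ)` close to `‖x' ∘ Aᵢ‖` and, after multiplying `vᵢ` by a unimodular scalar,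
real and nonnegative. Then `∑ ‖x' ∘ Aᵢ‖ ≈ ∑ x'(Aᵢ vᵢ) = x'(∑ Aᵢ vᵢ) ≤ ‖∑ Aᵢ vᵢ‖ ≤ SV₀^τ(F)`,
so in fact `Var₀^τ(F(·)'x') ≤ SV₀^τ(F)`.
-/

/-- The semivariation of an operator-valued function on `[0, τ]`. -/
noncomputable def semivariation {𝕜 U X : Type*} [RCLike 𝕜] [NormedAddCommGroup U]
    [NormedSpace 𝕜 U] [NormedAddCommGroup X] [NormedSpace 𝕜 X]
    (τ : ℝ) (f : ℝ → (U →L[𝕜] X)) : ℝ≥0∞ :=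
  ⨆ (n : ℕ) (t : Fin (n + 1) → ℝ) (_ : StrictMono t) (_ : t 0 = 0)
    (_ : t (Fin.last n) = τ) (u : Fin n → U) (_ : ∀ i, ‖u i‖ ≤ 1),
    (‖∑ i : Fin n, (f (t i.succ) - f (t i.castSucc)) (u i)‖₊ : ℝ≥0∞)

/-- The variation of a vector-valued function on `[0, τ]`. -/
noncomputable def vecVariation {E : Type*} [NormedAddCommGroup E]
    (τ : ℝ) (g : ℝ → E) : ℝ≥0∞ :=
  ⨆ (n : ℕ) (t : Fin (n + 1) → ℝ) (_ : StrictMono t) (_ : t 0 = 0)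
    (_ : t (Fin.last n) = τ),
    ∑ i : Fin n, (‖g (t i.succ) - g (t i.castSucc)‖₊ : ℝ≥0∞)

namespace StrongDual

variable {𝕜 U : Type*} [RCLike 𝕜] [NormedAddCommGroup U] [NormedSpace 𝕜 U]

theorem exists_apply_eq_norm_apply_of_lt_norm (φ : StrongDual 𝕜 U) {r : ℝ} (hr : r < ‖φ‖) :
    ∃ v : U, ‖v‖ ≤ 1 ∧ r < ‖φ v‖ ∧ φ v = ‖φ v‖ := by
  obtain ⟨u, hu, hru⟩ := φ.exists_lt_apply_of_lt_opNorm hr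
  obtain ⟨c, hc, hcu⟩ := RCLike.exists_norm_eq_mul_self (φ u)
  have hφcu : φ (c • u) = ‖φ u‖ := by rw [map_smul, smul_eq_mul, hcu]
  refine ⟨c • u, by simpa [norm_smul, hc] using hu.le, ?_, ?_⟩ <;>
    rw [hφcu, RCLike.norm_ofReal, abs_norm]
  exact hru

variable {ι : Type*} [Fintype ι]

theorem sum_norm_le_of_forall_norm_sum_apply_le (φ : ι → StrongDual 𝕜 U) {C : ℝ}
    (h : ∀ u : ι → U, (∀ i, ‖u i‖ ≤ 1) → ‖∑ i, φ i (u i)‖ ≤ C) : ∑ i, ‖φ i‖ ≤ C := by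
  refine le_of_forall_pos_le_add fun ε hε => ?_
  set δ := ε / (Fintype.card ι + 1)
  have hδ : 0 < δ := by positivity
  choose v hv_le hv_lt hv_eq using fun i =>
    (φ i).exists_apply_eq_norm_apply_of_lt_norm (sub_lt_self ‖φ i‖ hδ)
  -- all the values `φ i (v i)` are nonnegative reals, so no cancellation occurs in their sum
  have hsum : ∑ i, ‖φ i (v i)‖ = ‖∑ i, φ i (v i)‖ := by
    rw [Finset.sum_congr rfl fun i _ => hv_eq i, ← RCLike.ofReal_sum, RCLike.norm_ofReal,
      abs_of_nonneg (Finset.sum_nonneg fun i _ => norm_nonneg _)]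
  have hcard : Fintype.card ι * δ ≤ ε := by
    rw [mul_div_assoc', div_le_iff₀ (by positivity)]
    nlinarith
  calc ∑ i, ‖φ i‖ ≤ ∑ i, (‖φ i (v i)‖ + δ) :=
        Finset.sum_le_sum fun i _ => by linarith [hv_lt i]
    _ = ‖∑ i, φ i (v i)‖ + Fintype.card ι * δ := by
        rw [Finset.sum_add_distrib, hsum, Finset.sum_const, nsmul_eq_mul, Finset.card_univ]
    _ ≤ C + ε := add_le_add (h v hv_le) hcard

theorem sum_nnnorm_le_of_forall_nnnorm_sum_apply_le (φ : ι → StrongDual 𝕜 U) {C : ℝ≥0∞}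
    (h : ∀ u : ι → U, (∀ i, ‖u i‖ ≤ 1) → (‖∑ i, φ i (u i)‖₊ : ℝ≥0∞) ≤ C) :
    ∑ i, (‖φ i‖₊ : ℝ≥0∞) ≤ C := by
  rcases eq_top_or_lt_top C with rfl | hC
  · exact le_top
  lift C to NNReal using hC.ne
  simp only [ENNReal.coe_le_coe, ← NNReal.coe_le_coe, coe_nnnorm] at h
  rw [← ENNReal.ofNNReal_finsetSum, ENNReal.coe_le_coe, ← NNReal.coe_le_coe, NNReal.coe_sum]
  exact sum_norm_le_of_forall_norm_sum_apply_le φ h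

end StrongDual

section

variable {𝕜 U X : Type*} [RCLike 𝕜] [NormedAddCommGroup U] [NormedSpace 𝕜 U]
  [NormedAddCommGroup X] [NormedSpace 𝕜 X]

theorem nnnorm_sum_sub_apply_le_semivariation {τ : ℝ} (F : ℝ → (U →L[𝕜] X)) {n : ℕ}
    {t : Fin (n + 1) → ℝ} (ht : StrictMono t) (ht0 : t 0 = 0) (htn : t (Fin.last n) = τ)
    {u : Fin n → U} (hu : ∀ i, ‖u i‖ ≤ 1) :
    (‖∑ i : Fin n, (F (t i.succ) - F (t i.castSucc)) (u i)‖₊ : ℝ≥0∞) ≤ semivariation τ F :=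
  le_iSup_of_le n <| le_iSup_of_le t <| le_iSup_of_le ht <| le_iSup_of_le ht0 <|
    le_iSup_of_le htn <| le_iSup_of_le u <| le_iSup_of_le hu le_rfl

theorem vecVariation_dual_le_semivariation {τ : ℝ} (F : ℝ → (U →L[𝕜] X))
    (x' : StrongDual 𝕜 X) (hx' : ‖x'‖ ≤ 1) :
    vecVariation τ (fun t => x'.comp (F t)) ≤ semivariation τ F := by
  refine iSup_le fun n => iSup_le fun t => iSup_le fun ht => iSup_le fun ht0 =>
    iSup_le fun htn => ?_
  simp only [← ContinuousLinearMap.comp_sub]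
  refine StrongDual.sum_nnnorm_le_of_forall_nnnorm_sum_apply_le _ fun u hu => ?_
  calc (‖∑ i, x' ((F (t i.succ) - F (t i.castSucc)) (u i))‖₊ : ℝ≥0∞)
      = ‖x' (∑ i, (F (t i.succ) - F (t i.castSucc)) (u i))‖₊ := by rw [map_sum]
    _ ≤ ‖∑ i, (F (t i.succ) - F (t i.castSucc)) (u i)‖₊ := by
        gcongr
        exact (x'.le_opNorm _).trans (mul_le_of_le_one_left (norm_nonneg _) hx')
    _ ≤ semivariation τ F := nnnorm_sum_sub_apply_le_semivariation F ht ht0 htn hu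

end

theorem vecVariation_dual_le_two_mul_semivariation_general {𝕜 U X : Type*} [RCLike 𝕜]
    [NormedAddCommGroup U] [NormedSpace 𝕜 U]
    [NormedAddCommGroup X] [NormedSpace 𝕜 X]
    {τ : ℝ} (F : ℝ → (U →L[𝕜] X))
    (x' : StrongDual 𝕜 X) (hx' : ‖x'‖ ≤ 1) :
    vecVariation τ (fun t => x'.comp (F t)) ≤ 2 * semivariation τ F :=
  (vecVariation_dual_le_semivariation F x' hx').trans (le_mul_of_one_le_left' one_le_two)

/-- if `F` has bounded semivariation on `[0,τ]`, then for every functional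
`x'` of norm at most one, the `U'`-valued function `t ↦ F(t)' x' = x' ∘ F(t)` has bounded
variation on `[0,τ]`, with `Var₀^τ(F(·)'x') ≤ 2 · SV₀^τ(F)`. -/
theorem vecVariation_dual_le_two_mul_semivariation {𝕜 U X : Type*} [RCLike 𝕜]
    [NormedAddCommGroup U] [NormedSpace 𝕜 U] [CompleteSpace U]
    [NormedAddCommGroup X] [NormedSpace 𝕜 X] [CompleteSpace X]
    {τ : ℝ} (hτ : 0 < τ) (F : ℝ → (U →L[𝕜] X))
    (hF : semivariation τ F < ⊤)
    (x' : StrongDual 𝕜 X) (hx' : ‖x'‖ ≤ 1) :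
    vecVariation τ (fun t => x'.comp (F t)) ≤ 2 * semivariation τ F :=
  vecVariation_dual_le_two_mul_semivariation_general F x' hx'
end

section
/- Let (T(t)) be a C₀-semigroup on a Banach space X with generator A, and let λ be in the resolvent set of A. If B : U → X₋₁ is a bounded operator such that the map F(t) := T(t) R(λ, A₋₁) B from [0,τ] to L(U,X) has bounded semivariation on [0,τ], then for every x' ∈ X' with ‖x'‖ ≤ 1 the scalar-side dual function t ↦ B' R(λ̄, A') T(t)' x' has bounded variation on [0,τ] with Var₀^τ ≤ 2 SV₀^τ(F). -/
open scoped ENNReal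
open Filter

/-!
On each partition, pick `uᵢ` in the unit ball nearly norming `x' ∘ (F(tᵢ₊₁) - F(tᵢ))` and rotate
it by a unimodular scalar so that `x' ((F(tᵢ₊₁) - F(tᵢ)) uᵢ)` is real and nonnegative. Then
`∑ ‖x' ∘ (F(tᵢ₊₁) - F(tᵢ))‖ ≈ re x' (∑ (F(tᵢ₊₁) - F(tᵢ)) uᵢ) ≤ ‖∑ (F(tᵢ₊₁) - F(tᵢ)) uᵢ‖`,
which is one of the sums in the supremum defining `SV₀^τ(F)`.
-/

theorem RCLike.exists_norm_le_one_mul_eq_norm {𝕜 : Type*} [RCLike 𝕜] (z : 𝕜) :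
    ∃ c : 𝕜, ‖c‖ ≤ 1 ∧ c * z = ‖z‖ := by
  refine ⟨‖z‖ / z, ?_, ?_⟩
  · rw [norm_div, RCLike.norm_ofReal, abs_norm]
    exact div_self_le_one _
  · rcases eq_or_ne z 0 with rfl | hz
    · simp
    · field_simp

theorem StrongDual.exists_norm_le_one_opNorm_sub_le_re {𝕜 E : Type*} [RCLike 𝕜]
    [NormedAddCommGroup E] [NormedSpace 𝕜 E] (φ : StrongDual 𝕜 E) {δ : ℝ} (hδ : 0 < δ) :
    ∃ u : E, ‖u‖ ≤ 1 ∧ ‖φ‖ - δ ≤ RCLike.re (φ u) := by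
  obtain ⟨u, hu, hφu⟩ := φ.exists_lt_apply_of_lt_opNorm (sub_lt_self ‖φ‖ hδ)
  obtain ⟨c, hc, hcφu⟩ := RCLike.exists_norm_le_one_mul_eq_norm (φ u)
  refine ⟨c • u, ?_, ?_⟩
  · rw [norm_smul]
    exact mul_le_one₀ hc (norm_nonneg u) hu.le
  · rw [map_smul, smul_eq_mul, hcφu, RCLike.ofReal_re]
    exact hφu.le

section Duality

variable {𝕜 U X : Type*} [RCLike 𝕜] [NormedAddCommGroup U] [NormedSpace 𝕜 U]
  [NormedAddCommGroup X] [NormedSpace 𝕜 X] {x' : StrongDual 𝕜 X}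

theorem exists_sum_norm_comp_sub_le_norm_sum_apply {ι : Type*} [Fintype ι] (hx' : ‖x'‖ ≤ 1)
    (D : ι → U →L[𝕜] X) {ε : ℝ} (hε : 0 < ε) :
    ∃ u : ι → U, (∀ i, ‖u i‖ ≤ 1) ∧ ∑ i, ‖x'.comp (D i)‖ - ε ≤ ‖∑ i, D i (u i)‖ := by
  set δ := ε / (Fintype.card ι + 1)
  have hδ : 0 < δ := by positivity
  have hcardδ : Fintype.card ι * δ ≤ ε := by
    rw [mul_div_assoc', div_le_iff₀ (by positivity)]
    nlinarith
  choose u hu hnorming using fun i =>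
    StrongDual.exists_norm_le_one_opNorm_sub_le_re (x'.comp (D i)) hδ
  refine ⟨u, hu, ?_⟩
  calc ∑ i, ‖x'.comp (D i)‖ - ε ≤ ∑ i, (‖x'.comp (D i)‖ - δ) := by
        rw [Finset.sum_sub_distrib, Finset.sum_const, Finset.card_univ, nsmul_eq_mul]
        linarith
    _ ≤ ∑ i, RCLike.re (x' (D i (u i))) := Finset.sum_le_sum fun i _ => hnorming i
    _ = RCLike.re (x' (∑ i, D i (u i))) := by rw [map_sum, map_sum]
    _ ≤ ‖x' (∑ i, D i (u i))‖ := RCLike.re_le_norm _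
    _ ≤ ‖∑ i, D i (u i)‖ := (x'.le_of_opNorm_le hx' _).trans_eq (one_mul _)

theorem sum_nnnorm_comp_le_iSup_nnnorm_sum_apply {ι : Type*} [Fintype ι] (hx' : ‖x'‖ ≤ 1)
    (D : ι → U →L[𝕜] X) :
    ∑ i, (‖x'.comp (D i)‖₊ : ℝ≥0∞) ≤
      ⨆ (u : ι → U) (_ : ∀ i, ‖u i‖ ≤ 1), (‖∑ i, D i (u i)‖₊ : ℝ≥0∞) := by
  refine ENNReal.le_of_forall_pos_le_add fun ε hε _ => ?_
  obtain ⟨u, hu, hsum⟩ := exists_sum_norm_comp_sub_le_norm_sum_apply hx' D hε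
  have hsum' : ∑ i, ‖x'.comp (D i)‖₊ ≤ ‖∑ i, D i (u i)‖₊ + ε := by
    rw [← NNReal.coe_le_coe]
    push_cast
    exact sub_le_iff_le_add.mp hsum
  calc ∑ i, (‖x'.comp (D i)‖₊ : ℝ≥0∞) ≤ (‖∑ i, D i (u i)‖₊ : ℝ≥0∞) + ε := by
        exact_mod_cast hsum'
    _ ≤ _ := by
        gcongr
        exact le_iSup₂_of_le u hu le_rfl

theorem vecVariation_comp_le_semivariation (hx' : ‖x'‖ ≤ 1) (τ : ℝ) (f : ℝ → U →L[𝕜] X) :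
    vecVariation τ (fun t => x'.comp (f t)) ≤ semivariation τ f := by
  refine iSup_le fun n => iSup_le fun t => iSup_le fun ht => iSup_le fun ht0 =>
    iSup_le fun htτ => ?_
  calc ∑ i : Fin n, (‖x'.comp (f (t i.succ)) - x'.comp (f (t i.castSucc))‖₊ : ℝ≥0∞)
      = ∑ i : Fin n, (‖x'.comp (f (t i.succ) - f (t i.castSucc))‖₊ : ℝ≥0∞) := by
        simp only [ContinuousLinearMap.comp_sub]
    _ ≤ ⨆ (u : Fin n → U) (_ : ∀ i, ‖u i‖ ≤ 1),
          (‖∑ i : Fin n, (f (t i.succ) - f (t i.castSucc)) (u i)‖₊ : ℝ≥0∞) :=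
        sum_nnnorm_comp_le_iSup_nnnorm_sum_apply hx' _
    _ ≤ semivariation τ f := by
        unfold semivariation
        exact le_iSup_of_le n <| le_iSup_of_le t <| le_iSup_of_le ht <| le_iSup_of_le ht0 <|
          le_iSup_of_le htτ le_rfl

end Duality

/-- `X₋₁` is modelled by a Banach space `W`, `R(λ, A₋₁)` by `R : W →L[𝕜] X`, and
`B' R(λ̄, A') T(t)' x'` by `x' ∘ T(t) ∘ R ∘ B`. -/
theorem variation_dual_resolvent_le_general {𝕜 U X W : Type*} [RCLike 𝕜]
    [NormedAddCommGroup U] [NormedSpace 𝕜 U]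
    [NormedAddCommGroup X] [NormedSpace 𝕜 X]
    [NormedAddCommGroup W] [NormedSpace 𝕜 W]
    (T : ℝ → (X →L[𝕜] X))
    (R : W →L[𝕜] X) (B : U →L[𝕜] W) {τ : ℝ} :
    ∀ x' : StrongDual 𝕜 X, ‖x'‖ ≤ 1 →
      vecVariation τ (fun t => ((x'.comp (T t)).comp R).comp B) ≤
        2 * semivariation τ (fun t => ((T t).comp R).comp B) := by
  intro x' hx'
  calc vecVariation τ (fun t => ((x'.comp (T t)).comp R).comp B)
      = vecVariation τ (fun t => x'.comp (((T t).comp R).comp B)) := rfl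
    _ ≤ semivariation τ (fun t => ((T t).comp R).comp B) :=
        vecVariation_comp_le_semivariation hx' τ _
    _ ≤ 2 * semivariation τ (fun t => ((T t).comp R).comp B) :=
        le_mul_of_one_le_left zero_le one_le_two

/-- let `(T(t))` be a `C₀`-semigroup on `X` with generator `A` and
`λ ∈ ρ(A)`.  The extrapolation space `X₋₁` is modelled by a Banach space `W`; the
resolvent `R(λ, A₋₁)` is a bounded operator `R : W → X` and `B : U → W` is a control
operator.  If `F(t) := T(t) R(λ, A₋₁) B` has bounded semivariation on `[0,τ]`, then for
every `x' ∈ X'` with `‖x'‖ ≤ 1` the function `t ↦ B' R(λ̄, A') T(t)' x'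
= x' ∘ T(t) ∘ R ∘ B` has bounded variation on `[0,τ]` with `Var₀^τ ≤ 2 SV₀^τ(F)`. -/
theorem variation_dual_resolvent_le {𝕜 U X W : Type*} [RCLike 𝕜]
    [NormedAddCommGroup U] [NormedSpace 𝕜 U] [CompleteSpace U]
    [NormedAddCommGroup X] [NormedSpace 𝕜 X] [CompleteSpace X]
    [NormedAddCommGroup W] [NormedSpace 𝕜 W] [CompleteSpace W]
    (T : ℝ → (X →L[𝕜] X))
    (hT0 : T 0 = ContinuousLinearMap.id 𝕜 X)
    (hTadd : ∀ s t : ℝ, 0 ≤ s → 0 ≤ t → T (s + t) = (T s).comp (T t))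
    (hTcont : ∀ x : X, ContinuousOn (fun t => T t x) (Set.Ici (0 : ℝ)))
    (R : W →L[𝕜] X) (B : U →L[𝕜] W) {τ : ℝ} (hτ : 0 < τ)
    (hSV : semivariation τ (fun t => ((T t).comp R).comp B) < ⊤) :
    ∀ x' : StrongDual 𝕜 X, ‖x'‖ ≤ 1 →
      vecVariation τ (fun t => ((x'.comp (T t)).comp R).comp B) ≤
        2 * semivariation τ (fun t => ((T t).comp R).comp B) :=
  variation_dual_resolvent_le_general T R B
end

section
/- Let X be a Banach space, (T(t)) a C₀-semigroup on X, and X^⊙ the sun-dual, i.e. the closed subspace of X' on which the adjoint semigroup (T(t)') is strongly continuous. Then X^⊙ is norming up to the constant M := limsup_{t↓0} ‖T(t)‖: for every x ∈ X, ‖x‖ ≤ M · sup{ |⟨x, x^⊙⟩| : x^⊙ ∈ X^⊙, ‖x^⊙‖ ≤ 1 }. -/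
/-!
Take `x'` with `‖x'‖ ≤ 1` and `x' x = ‖x‖`, and the weak-* integrals `J t = ∫₀ᵗ T(s)' x' ds`.
They lie in `X^⊙`, because `T(h)' (J t) - J t = ∫ₜ^{t+h} T(s)' x' ds - ∫₀ʰ T(s)' x' ds` is `O(h)`
(`T` is locally bounded by Banach–Steinhaus). If `‖T s‖ < K` for `0 < s ≤ t`, then
`‖J t‖ ≤ K t`, so `(K t)⁻¹ • J t` lies in the unit ball of `X^⊙`, while `t⁻¹ (J t) x → ‖x‖` as
`t ↓ 0`. Hence `‖x‖ ≤ K · sup` for every `K > limsup_{t↓0} ‖T t‖`.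
-/

open Filter Topology Set

section WeakStarIntegral

variable {𝕜 E : Type*} [RCLike 𝕜] [NormedAddCommGroup E] [NormedSpace 𝕜 E]

theorem exists_norm_le_of_continuousOn_apply [CompleteSpace E] {F α : Type*}
    [NormedAddCommGroup F] [NormedSpace 𝕜 F] [TopologicalSpace α] {s : Set α} (hs : IsCompact s)
    {L : α → E →L[𝕜] F} (hL : ∀ z, ContinuousOn (fun a => L a z) s) :
    ∃ C, ∀ a ∈ s, ‖L a‖ ≤ C := by
  obtain ⟨C, hC⟩ := banach_steinhaus (g := fun a : s => L a) fun z =>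
    (hs.exists_bound_of_continuousOn (hL z)).imp fun _ hC a => hC a a.2
  exact ⟨C, fun a ha => hC ⟨a, ha⟩⟩

theorem norm_intervalIntegral_apply_le {L : ℝ → StrongDual 𝕜 E} {a b C : ℝ}
    (hC : ∀ s ∈ uIoc a b, ‖L s‖ ≤ C) (z : E) :
    ‖∫ s in a..b, L s z‖ ≤ C * |b - a| * ‖z‖ := by
  rw [mul_right_comm]
  exact intervalIntegral.norm_integral_le_of_norm_le_const fun s hs =>
    (L s).le_of_opNorm_le (hC s hs) z

variable [CompleteSpace E]

open Classical in
/-- The weak-* integral `z ↦ ∫ₐᵇ L s z`; it is `0` unless every `s ↦ L s z` is continuous on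
`[a, b]`. -/
noncomputable def weakStarIntegral (L : ℝ → StrongDual 𝕜 E) (a b : ℝ) : StrongDual 𝕜 E :=
  if hL : ∀ z, ContinuousOn (fun s => L s z) (uIcc a b) then
    LinearMap.mkContinuousOfExistsBound
      { toFun := fun z => ∫ s in a..b, L s z
        map_add' := fun z w => by
          simp only [map_add]
          exact intervalIntegral.integral_add (hL z).intervalIntegrable (hL w).intervalIntegrable
        map_smul' := fun c z => by
          simp only [map_smul, RingHom.id_apply]
          exact intervalIntegral.integral_smul c _ }
      (by
        obtain ⟨C, hC⟩ := exists_norm_le_of_continuousOn_apply isCompact_uIcc hL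
        exact ⟨C * |b - a|, norm_intervalIntegral_apply_le fun s hs => hC s (uIoc_subset_uIcc hs)⟩)
  else 0

variable {L : ℝ → StrongDual 𝕜 E} {a b c : ℝ}

theorem weakStarIntegral_apply (hL : ∀ z, ContinuousOn (fun s => L s z) (uIcc a b)) (z : E) :
    weakStarIntegral L a b z = ∫ s in a..b, L s z := by
  rw [weakStarIntegral, dif_pos hL]
  rfl

theorem norm_weakStarIntegral_le {C : ℝ} (hC0 : 0 ≤ C) (hC : ∀ s ∈ uIoc a b, ‖L s‖ ≤ C) :
    ‖weakStarIntegral L a b‖ ≤ C * |b - a| := by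
  by_cases hL : ∀ z, ContinuousOn (fun s => L s z) (uIcc a b)
  · refine ContinuousLinearMap.opNorm_le_bound _ (by positivity) fun z => ?_
    rw [weakStarIntegral_apply hL]
    exact norm_intervalIntegral_apply_le hC z
  · rw [weakStarIntegral, dif_neg hL, norm_zero]
    positivity

theorem weakStarIntegral_add_adjacent_intervals {S : Set ℝ}
    (hL : ∀ z, ContinuousOn (fun s => L s z) S) (hab : uIcc a b ⊆ S) (hbc : uIcc b c ⊆ S) :
    weakStarIntegral L a b + weakStarIntegral L b c = weakStarIntegral L a c := by
  have hac : uIcc a c ⊆ S := uIcc_subset_uIcc_union_uIcc.trans (union_subset hab hbc)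
  ext z
  rw [add_apply, weakStarIntegral_apply fun z => (hL z).mono hab,
    weakStarIntegral_apply fun z => (hL z).mono hbc,
    weakStarIntegral_apply fun z => (hL z).mono hac]
  exact intervalIntegral.integral_add_adjacent_intervals ((hL z).mono hab).intervalIntegrable
    ((hL z).mono hbc).intervalIntegrable

theorem tendsto_weakStarIntegral_self_add (hL : ∀ z, ContinuousOn (fun s => L s z) (Ici a)) :
    Tendsto (fun h => weakStarIntegral L a (a + h)) (𝓝[>] 0) (𝓝 0) := by
  obtain ⟨C, hC⟩ := exists_norm_le_of_continuousOn_apply (isCompact_Icc (a := a) (b := a + 1))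
    fun z => (hL z).mono Icc_subset_Ici_self
  refine squeeze_zero_norm' (a := fun h => max C 0 * h) ?_ ?_
  · filter_upwards [Ioo_mem_nhdsGT zero_lt_one] with h hh
    have := norm_weakStarIntegral_le (L := L) (a := a) (b := a + h) (le_max_right C 0) fun s hs =>
      (hC s ?_).trans (le_max_left C 0)
    · rwa [add_sub_cancel_left, abs_of_pos hh.1] at this
    · rw [uIoc_of_le (by linarith [hh.1])] at hs
      exact ⟨hs.1.le, by linarith [hs.2, hh.2]⟩
  · simpa using (tendsto_id.const_mul (max C 0)).mono_left (nhdsWithin_le_nhds (a := (0 : ℝ)))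

end WeakStarIntegral

theorem tendsto_inv_smul_intervalIntegral_nhdsGT_zero {E : Type*} [NormedAddCommGroup E]
    [NormedSpace ℝ E] [CompleteSpace E] {f : ℝ → E} (hf : ContinuousOn f (Ici 0)) :
    Tendsto (fun t => t⁻¹ • ∫ s in (0 : ℝ)..t, f s) (𝓝[>] 0) (𝓝 (f 0)) := by
  have hderiv : HasDerivWithinAt (fun u => ∫ s in (0 : ℝ)..u, f s) (f 0) (Ici 0) 0 :=
    intervalIntegral.integral_hasDerivWithinAt_right (t := Ioi 0) IntervalIntegrable.refl
      ((hf.mono Ioi_subset_Ici_self).stronglyMeasurableAtFilter_nhdsWithin measurableSet_Ioi 0)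
      ((hf 0 self_mem_Ici).mono Ioi_subset_Ici_self)
  have := (hasDerivWithinAt_iff_tendsto_slope' self_notMem_Ioi).mp hderiv.Ioi_of_Ici
  simpa [slope_fun_def, vsub_eq_sub] using this

section Semigroup

variable {𝕜 X : Type*} [RCLike 𝕜] [NormedAddCommGroup X] [NormedSpace 𝕜 X] {T : ℝ → X →L[𝕜] X}

theorem norm_apply_le_sSup_sunDual {y : StrongDual 𝕜 X}
    (hy : Tendsto (fun t => y.comp (T t)) (𝓝[>] 0) (𝓝 y)) (hy1 : ‖y‖ ≤ 1) (x : X) :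
    ‖y x‖ ≤ sSup {r : ℝ | ∃ x' : StrongDual 𝕜 X,
      Tendsto (fun t => x'.comp (T t)) (𝓝[>] 0) (𝓝 x') ∧ ‖x'‖ ≤ 1 ∧ r = ‖x' x‖} := by
  refine le_csSup ⟨‖x‖, ?_⟩ ⟨y, hy, hy1, rfl⟩
  rintro _ ⟨x', -, hx'1, rfl⟩
  exact x'.le_of_opNorm_le hx'1 x |>.trans_eq (one_mul _)

theorem continuousOn_comp_apply (hTcont : ∀ x : X, ContinuousOn (fun t => T t x) (Ici 0))
    (x' : StrongDual 𝕜 X) (z : X) : ContinuousOn (fun s => x'.comp (T s) z) (Ici 0) :=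
  x'.continuous.comp_continuousOn (hTcont z)

variable [CompleteSpace X]

theorem norm_weakStarIntegral_comp_le (x' : StrongDual 𝕜 X) {K t : ℝ} (hK : 0 ≤ K)
    (ht : 0 ≤ t) (hT : ∀ s ∈ Ioc 0 t, ‖T s‖ ≤ K) :
    ‖weakStarIntegral (fun s => x'.comp (T s)) 0 t‖ ≤ ‖x'‖ * K * t := by
  have hLK : ∀ s ∈ uIoc 0 t, ‖x'.comp (T s)‖ ≤ ‖x'‖ * K := fun s hs =>
    (x'.opNorm_comp_le (T s)).trans
      (mul_le_mul_of_nonneg_left (hT s (uIoc_of_le ht ▸ hs)) (norm_nonneg x'))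
  simpa [abs_of_nonneg ht] using norm_weakStarIntegral_le (by positivity) hLK

theorem weakStarIntegral_comp_semigroup
    (hTadd : ∀ s t : ℝ, 0 ≤ s → 0 ≤ t → T (s + t) = (T s).comp (T t))
    (hTcont : ∀ x : X, ContinuousOn (fun t => T t x) (Ici 0)) (x' : StrongDual 𝕜 X)
    {a b h : ℝ} (ha : 0 ≤ a) (hb : 0 ≤ b) (hh : 0 ≤ h) :
    (weakStarIntegral (fun s => x'.comp (T s)) a b).comp (T h) =
      weakStarIntegral (fun s => x'.comp (T s)) (a + h) (b + h) := by
  have hL := continuousOn_comp_apply hTcont x'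
  have hab : uIcc a b ⊆ Ici 0 := ordConnected_Ici.uIcc_subset ha hb
  have hab' : uIcc (a + h) (b + h) ⊆ Ici 0 :=
    ordConnected_Ici.uIcc_subset (mem_Ici.2 (by positivity)) (mem_Ici.2 (by positivity))
  ext z
  rw [ContinuousLinearMap.comp_apply, weakStarIntegral_apply fun z => (hL z).mono hab,
    weakStarIntegral_apply fun z => (hL z).mono hab', ← intervalIntegral.integral_comp_add_right]
  refine intervalIntegral.integral_congr fun s hs => ?_
  simp only [ContinuousLinearMap.comp_apply, hTadd s h (hab hs) hh]

theorem tendsto_comp_weakStarIntegral_semigroup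
    (hTadd : ∀ s t : ℝ, 0 ≤ s → 0 ≤ t → T (s + t) = (T s).comp (T t))
    (hTcont : ∀ x : X, ContinuousOn (fun t => T t x) (Ici 0)) (x' : StrongDual 𝕜 X)
    {t : ℝ} (ht : 0 ≤ t) :
    Tendsto (fun h => (weakStarIntegral (fun s => x'.comp (T s)) 0 t).comp (T h)) (𝓝[>] 0)
      (𝓝 (weakStarIntegral (fun s => x'.comp (T s)) 0 t)) := by
  set J := weakStarIntegral (fun s => x'.comp (T s))
  have hL := continuousOn_comp_apply hTcont x'
  have hsub : ∀ {c d : ℝ}, 0 ≤ c → 0 ≤ d → uIcc c d ⊆ Ici 0 := fun hc hd =>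
    ordConnected_Ici.uIcc_subset hc hd
  have hshift : ∀ h ∈ Ioi (0 : ℝ), J 0 t + (J t (t + h) - J 0 h) = (J 0 t).comp (T h) := by
    intro h (hh : 0 < h)
    rw [weakStarIntegral_comp_semigroup hTadd hTcont x' le_rfl ht hh.le, zero_add, ← add_sub_assoc,
      sub_eq_iff_eq_add', weakStarIntegral_add_adjacent_intervals hL (hsub le_rfl hh.le)
        (hsub hh.le (by positivity)),
      weakStarIntegral_add_adjacent_intervals hL (hsub le_rfl ht) (hsub ht (by positivity))]
  have hlim := (tendsto_const_nhds (x := J 0 t)).add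
    ((tendsto_weakStarIntegral_self_add fun z => (hL z).mono (Ici_subset_Ici.2 ht)).sub
      (by simpa using tendsto_weakStarIntegral_self_add (a := 0) hL))
  rw [sub_zero, add_zero] at hlim
  exact hlim.congr' (eventually_nhdsWithin_of_forall hshift)

theorem tendsto_inv_smul_weakStarIntegral_semigroup_apply
    (hT0 : T 0 = ContinuousLinearMap.id 𝕜 X)
    (hTcont : ∀ x : X, ContinuousOn (fun t => T t x) (Ici 0)) (x' : StrongDual 𝕜 X) (x : X) :
    Tendsto (fun t : ℝ => (t⁻¹ • weakStarIntegral (fun s => x'.comp (T s)) 0 t) x) (𝓝[>] 0)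
      (𝓝 (x' x)) := by
  have hL := continuousOn_comp_apply hTcont x'
  have hav := tendsto_inv_smul_intervalIntegral_nhdsGT_zero (hL x)
  rw [ContinuousLinearMap.comp_apply, hT0, ContinuousLinearMap.id_apply] at hav
  refine hav.congr' (eventually_nhdsWithin_of_forall fun t (ht : 0 < t) => ?_)
  dsimp only
  rw [smul_apply, weakStarIntegral_apply fun z => (hL z).mono
    (ordConnected_Ici.uIcc_subset self_mem_Ici (mem_Ici.2 ht.le))]

theorem norm_le_mul_sSup_of_eventually_norm_lt
    (hT0 : T 0 = ContinuousLinearMap.id 𝕜 X)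
    (hTadd : ∀ s t : ℝ, 0 ≤ s → 0 ≤ t → T (s + t) = (T s).comp (T t))
    (hTcont : ∀ x : X, ContinuousOn (fun t => T t x) (Ici 0))
    {K : ℝ} (hK : ∀ᶠ t in 𝓝[>] 0, ‖T t‖ < K) (x : X) :
    ‖x‖ ≤ K * sSup {r : ℝ | ∃ x' : StrongDual 𝕜 X,
      Tendsto (fun t => x'.comp (T t)) (𝓝[>] 0) (𝓝 x') ∧ ‖x'‖ ≤ 1 ∧ r = ‖x' x‖} := by
  obtain ⟨x', hx'1, hx'x⟩ := exists_dual_vector'' 𝕜 x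
  obtain ⟨u, hu0 : 0 < u, hu⟩ := mem_nhdsGT_iff_exists_Ioo_subset.mp hK
  have hKpos : 0 < K := (norm_nonneg _).trans_lt (hu ⟨half_pos hu0, half_lt_self hu0⟩)
  set S := sSup {r : ℝ | ∃ x' : StrongDual 𝕜 X,
    Tendsto (fun t => x'.comp (T t)) (𝓝[>] 0) (𝓝 x') ∧ ‖x'‖ ≤ 1 ∧ r = ‖x' x‖}
  set J := fun t => weakStarIntegral (fun s => x'.comp (T s)) 0 t
  have hbound : ∀ t ∈ Ioo 0 u, ‖(t⁻¹ • J t) x‖ ≤ K * S := by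
    rintro t ⟨ht0, htu⟩
    set y := K⁻¹ • t⁻¹ • J t
    have hy : Tendsto (fun h => y.comp (T h)) (𝓝[>] 0) (𝓝 y) := by
      simpa only [y, ContinuousLinearMap.smul_comp] using
        ((tendsto_comp_weakStarIntegral_semigroup hTadd hTcont x' ht0.le).const_smul t⁻¹).const_smul
          K⁻¹
    have hJ : ‖J t‖ ≤ ‖x'‖ * K * t := norm_weakStarIntegral_comp_le x' hKpos.le ht0.le
      fun s hs => (hu ⟨hs.1, hs.2.trans_lt htu⟩).le
    have hy1 : ‖y‖ ≤ 1 := by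
      calc ‖y‖ = K⁻¹ * t⁻¹ * ‖J t‖ := by
            rw [norm_smul, norm_smul, norm_inv, norm_inv, Real.norm_of_nonneg hKpos.le,
              Real.norm_of_nonneg ht0.le, mul_assoc]
        _ ≤ K⁻¹ * t⁻¹ * (1 * K * t) := by gcongr; exact hJ.trans (by gcongr)
        _ = 1 := by field_simp
    calc ‖(t⁻¹ • J t) x‖ = K * ‖y x‖ := by
          rw [← smul_inv_smul₀ hKpos.ne' (t⁻¹ • J t), smul_apply, norm_smul,
            Real.norm_of_nonneg hKpos.le]
      _ ≤ K * S := by gcongr; exact norm_apply_le_sSup_sunDual hy hy1 x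
  have hlim := (tendsto_inv_smul_weakStarIntegral_semigroup_apply hT0 hTcont x' x).norm
  rw [hx'x, RCLike.norm_ofReal, abs_norm] at hlim
  exact le_of_tendsto hlim (eventually_of_mem (Ioo_mem_nhdsGT hu0) hbound)

theorem isBoundedUnder_norm_nhdsGT_zero
    (hTcont : ∀ x : X, ContinuousOn (fun t => T t x) (Ici 0)) :
    IsBoundedUnder (· ≤ ·) (𝓝[>] 0) (fun t => ‖T t‖) := by
  obtain ⟨C, hC⟩ := exists_norm_le_of_continuousOn_apply (isCompact_Icc (a := 0) (b := 1))
    fun x => (hTcont x).mono Icc_subset_Ici_self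
  exact isBoundedUnder_of_eventually_le
    (eventually_of_mem (Ioo_mem_nhdsGT one_pos) fun t ht => hC t (Ioo_subset_Icc_self ht))

end Semigroup

/-- the sun-dual `X^⊙` (the subspace of `X'` on which the adjoint semigroup
is strongly continuous) is norming up to the constant `M := limsup_{t↓0} ‖T(t)‖`:
for every `x ∈ X`, `‖x‖ ≤ M · sup{ |⟨x, x^⊙⟩| : x^⊙ ∈ X^⊙, ‖x^⊙‖ ≤ 1 }`. -/
theorem sunDual_norming {𝕜 X : Type*} [RCLike 𝕜] [NormedAddCommGroup X]
    [NormedSpace 𝕜 X] [CompleteSpace X]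
    (T : ℝ → (X →L[𝕜] X))
    (hT0 : T 0 = ContinuousLinearMap.id 𝕜 X)
    (hTadd : ∀ s t : ℝ, 0 ≤ s → 0 ≤ t → T (s + t) = (T s).comp (T t))
    (hTcont : ∀ x : X, ContinuousOn (fun t => T t x) (Set.Ici (0 : ℝ))) :
    ∀ x : X,
      ‖x‖ ≤ (limsup (fun t => ‖T t‖) (𝓝[>] (0 : ℝ))) *
        sSup {r : ℝ | ∃ x' : StrongDual 𝕜 X,
          (Tendsto (fun t => x'.comp (T t)) (𝓝[>] (0 : ℝ)) (𝓝 x')) ∧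
          ‖x'‖ ≤ 1 ∧ r = ‖x' x‖} := by
  intro x
  set M := limsup (fun t => ‖T t‖) (𝓝[>] 0)
  set S := sSup {r : ℝ | ∃ x' : StrongDual 𝕜 X,
    Tendsto (fun t => x'.comp (T t)) (𝓝[>] 0) (𝓝 x') ∧ ‖x'‖ ≤ 1 ∧ r = ‖x' x‖}
  have hlim : Tendsto (fun K => K * S) (𝓝[>] M) (𝓝 (M * S)) :=
    ((continuous_mul_const S).tendsto M).mono_left nhdsWithin_le_nhds
  refine ge_of_tendsto hlim (eventually_nhdsWithin_of_forall fun K (hK : M < K) => ?_)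
  exact norm_le_mul_sSup_of_eventually_norm_lt hT0 hTadd hTcont
    (eventually_lt_of_limsup_lt hK (isBoundedUnder_norm_nhdsGT_zero hTcont)) x
end

section
/- Let Y be a Banach space, p, q ∈ [1,∞] Hölder conjugates with q < ∞, and g ∈ L^q([0,τ], Y'). Then ‖g‖_{L^q} = sup{ |∫₀^τ ⟨u(t), g(t)⟩ dt| : u ∈ L^p([0,τ], Y), ‖u‖_{L^p} ≤ 1 } (the norming property of vector-valued L^p duality). -/
/-!
Hölder's inequality gives `≤`. For `≥`, approximate `g` in `L^q` by a simple function `s`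
(this is where `q < ∞` enters). For each of the finitely many values `c` of `s` choose `y_c` in
the unit ball with `c y_c` real and close to `‖c‖`. Then `v t = ‖s t‖ ^ (q - 1) • y_{s t}` pairs
with `s` to almost `‖s‖_q ^ q`, while `‖v‖_p ≤ ‖s‖_q ^ (q - 1)` because `(q - 1) p = q`; so
`v / ‖s‖_q ^ (q - 1)` lies in the unit ball of `L^p` and almost norms `s`, hence `g`.
-/

open MeasureTheory
open scoped ENNReal

theorem StrongDual.exists_almost_norming {𝕜 Y : Type*} [RCLike 𝕜] [NormedAddCommGroup Y]
    [NormedSpace 𝕜 Y] (c : StrongDual 𝕜 Y) {θ : ℝ} (hθ : θ < 1) :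
    ∃ y : Y, ‖y‖ ≤ 1 ∧ c y = (‖c y‖ : 𝕜) ∧ θ * ‖c‖ ≤ ‖c y‖ := by
  by_cases hc : θ * ‖c‖ < ‖c‖
  · obtain ⟨y, hy, hcy⟩ := c.exists_lt_apply_of_lt_opNorm hc
    set a : 𝕜 := (‖c y‖ : 𝕜) / c y
    have ha : ‖a‖ ≤ 1 := by
      rw [norm_div, RCLike.norm_ofReal, abs_norm]
      exact div_self_le_one _
    have hca : c (a • y) = ‖c y‖ :=
      (c.map_smul a y).trans (div_mul_cancel_of_imp (by simp +contextual))
    refine ⟨a • y, ?_, ?_, ?_⟩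
    · simpa [norm_smul] using mul_le_one₀ ha (norm_nonneg y) hy.le
    all_goals simp [hca, hcy.le]
  · have hc₀ : ‖c‖ = 0 := by nlinarith [norm_nonneg c]
    exact ⟨0, by simp, by simp, by simp [hc₀]⟩

namespace MeasureTheory

variable {α : Type*} [MeasurableSpace α] {μ : Measure α} {p q : ℝ≥0∞}

theorem eLpNorm_norm_rpow_sub_one_le {E : Type*} [NormedAddCommGroup E]
    [ENNReal.HolderConjugate p q] (hq : q ≠ ∞) (f : α → E) :
    eLpNorm (fun t => ‖f t‖ ^ (q.toReal - 1)) p μ ≤ eLpNorm f q μ ^ (q.toReal - 1) := by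
  by_cases hq₁ : q = 1
  · have hp : p = ∞ := (ENNReal.HolderConjugate.eq_top_iff_eq_one p q).mpr hq₁
    subst hp hq₁
    simpa using eLpNormEssSup_le_of_ae_bound (μ := μ) (C := 1) (f := fun _ : α => (1 : ℝ))
      (by simp)
  · have hp : p ≠ ∞ := (ENNReal.HolderConjugate.ne_top_iff_ne_one p q).mpr hq₁
    have hpq := ENNReal.HolderConjugate.toReal_of_ne_top hp hq
    have hexp : p * ENNReal.ofReal (q.toReal - 1) = q := by
      rw [← ENNReal.ofReal_toReal hp, ← ENNReal.ofReal_mul ENNReal.toReal_nonneg, mul_comm,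
        hpq.symm.sub_one_mul_conj, ENNReal.ofReal_toReal hq]
    rw [eLpNorm_norm_rpow f (sub_pos.mpr hpq.symm.lt), hexp]

theorem MemLp.toReal_eLpNorm_rpow_eq_integral {E : Type*} [NormedAddCommGroup E] {f : α → E}
    (hf : MemLp f q μ) (hq₀ : q ≠ 0) (hq : q ≠ ∞) :
    (eLpNorm f q μ).toReal ^ q.toReal = ∫ t, ‖f t‖ ^ q.toReal ∂μ := by
  have hI : 0 ≤ ∫ t, ‖f t‖ ^ q.toReal ∂μ := integral_nonneg fun t => by positivity
  rw [hf.eLpNorm_eq_integral_rpow_norm hq₀ hq, ENNReal.toReal_ofReal (by positivity),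
    ← Real.rpow_mul hI, inv_mul_cancel₀ (ENNReal.toReal_pos hq₀ hq).ne', Real.rpow_one]

variable {𝕜 Y : Type*} [RCLike 𝕜] [NormedAddCommGroup Y] [NormedSpace 𝕜 Y]

theorem MemLp.exists_eLpNorm_le_one_norm_integral_apply_eq_div
    (g : α → StrongDual 𝕜 Y) {v : α → Y} (hv : MemLp v p μ) {B : ℝ} (hB : 0 < B)
    (hvB : eLpNorm v p μ ≤ ENNReal.ofReal B) :
    ∃ u : α → Y, MemLp u p μ ∧ eLpNorm u p μ ≤ 1 ∧
      ‖∫ t, g t (u t) ∂μ‖ = ‖∫ t, g t (v t) ∂μ‖ / B := by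
  refine ⟨((B⁻¹ : ℝ) : 𝕜) • v, hv.const_smul _, ?_, ?_⟩
  · calc eLpNorm (((B⁻¹ : ℝ) : 𝕜) • v) p μ = ENNReal.ofReal B⁻¹ * eLpNorm v p μ := by
          rw [eLpNorm_const_smul, ← ofReal_norm, RCLike.norm_ofReal, abs_of_pos (inv_pos.mpr hB)]
      _ ≤ ENNReal.ofReal B⁻¹ * ENNReal.ofReal B := by gcongr
      _ = 1 := by
          rw [← ENNReal.ofReal_mul (inv_nonneg.mpr hB.le), inv_mul_cancel₀ hB.ne',
            ENNReal.ofReal_one]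
  · simp only [Pi.smul_apply, map_smul, smul_eq_mul, integral_const_mul, norm_mul,
      RCLike.norm_ofReal, abs_of_pos (inv_pos.mpr hB)]
    ring

section HolderConjugate

variable [ENNReal.HolderConjugate p q] {g : α → StrongDual 𝕜 Y} {u : α → Y}

theorem MemLp.integrable_apply (hg : MemLp g q μ) (hu : MemLp u p μ) :
    Integrable (fun t => g t (u t)) μ :=
  memLp_one_iff_integrable.mp <|
    (ContinuousLinearMap.id 𝕜 (StrongDual 𝕜 Y)).memLp_of_bilin 1 hg hu

theorem norm_integral_apply_le (hg : MemLp g q μ) (hu : MemLp u p μ) :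
    ‖∫ t, g t (u t) ∂μ‖ ≤ (eLpNorm g q μ).toReal * (eLpNorm u p μ).toReal := by
  have hHolder : eLpNorm (fun t => g t (u t)) 1 μ ≤ eLpNorm g q μ * eLpNorm u p μ := by
    simpa using eLpNorm_le_eLpNorm_mul_eLpNorm'_of_norm (r := 1) hg.1 hu.1 (fun c y => c y) 1
      (.of_forall fun t => by simpa using (g t).le_opNorm (u t))
  calc ‖∫ t, g t (u t) ∂μ‖ ≤ ∫ t, ‖g t (u t)‖ ∂μ := norm_integral_le_integral_norm _
    _ = (eLpNorm (fun t => g t (u t)) 1 μ).toReal := by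
        rw [integral_norm_eq_lintegral_enorm (hg.integrable_apply hu).1,
          eLpNorm_one_eq_lintegral_enorm]
    _ ≤ (eLpNorm g q μ * eLpNorm u p μ).toReal :=
        ENNReal.toReal_mono (ENNReal.mul_ne_top hg.2.ne hu.2.ne) hHolder
    _ = _ := ENNReal.toReal_mul

theorem norm_integral_apply_le_of_eLpNorm_le_one (hg : MemLp g q μ) (hu : MemLp u p μ)
    (hu₁ : eLpNorm u p μ ≤ 1) : ‖∫ t, g t (u t) ∂μ‖ ≤ (eLpNorm g q μ).toReal :=
  (norm_integral_apply_le hg hu).trans <| mul_le_of_le_one_right ENNReal.toReal_nonneg <|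
    ENNReal.toReal_le_of_le_ofReal zero_le_one (by simpa using hu₁)

variable [IsFiniteMeasure μ]

theorem SimpleFunc.exists_eLpNorm_le_and_mul_le_norm_integral_apply
    (s : SimpleFunc α (StrongDual 𝕜 Y)) (hq : q ≠ ∞) {θ : ℝ} (hθ : θ < 1) :
    ∃ v : α → Y, MemLp v p μ ∧ eLpNorm v p μ ≤ eLpNorm s q μ ^ (q.toReal - 1) ∧
      θ * (eLpNorm s q μ).toReal ^ q.toReal ≤ ‖∫ t, s t (v t) ∂μ‖ := by
  choose φ hφ_norm hφ_real hφ_ge using fun c : StrongDual 𝕜 Y => c.exists_almost_norming hθ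
  set r := q.toReal - 1
  let v := s.map fun c => ((‖c‖ ^ r : ℝ) : 𝕜) • φ c
  have hv_norm (t : α) : ‖v t‖ ≤ ‖s t‖ ^ r := by
    rw [SimpleFunc.map_apply, norm_smul, RCLike.norm_ofReal, abs_of_nonneg (by positivity)]
    exact mul_le_of_le_one_right (by positivity) (hφ_norm (s t))
  have hv_apply (t : α) : s t (v t) = ((‖s t‖ ^ r * ‖s t (φ (s t))‖ : ℝ) : 𝕜) := by
    rw [SimpleFunc.map_apply, map_smul, smul_eq_mul, RCLike.ofReal_mul, ← hφ_real]
  have hq₀ : q ≠ 0 := ENNReal.HolderConjugate.ne_zero q p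
  have hv_ge (t : α) : θ * ‖s t‖ ^ q.toReal ≤ ‖s t‖ ^ r * ‖s t (φ (s t))‖ :=
    calc θ * ‖s t‖ ^ q.toReal = ‖s t‖ ^ r * (θ * ‖s t‖) := by
          rw [← sub_add_cancel q.toReal 1, Real.rpow_add' (norm_nonneg _)
            (by simpa using (ENNReal.toReal_pos hq₀ hq).ne'), Real.rpow_one]
          ring
      _ ≤ ‖s t‖ ^ r * ‖s t (φ (s t))‖ := by gcongr; exact hφ_ge (s t)
  refine ⟨v, v.memLp_of_isFiniteMeasure p μ, ?_, ?_⟩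
  · exact (eLpNorm_mono_real hv_norm).trans (eLpNorm_norm_rpow_sub_one_le hq _)
  · calc θ * (eLpNorm s q μ).toReal ^ q.toReal = ∫ t, θ * ‖s t‖ ^ q.toReal ∂μ := by
          rw [(s.memLp_of_isFiniteMeasure q μ).toReal_eLpNorm_rpow_eq_integral hq₀ hq,
            integral_const_mul]
      _ ≤ ∫ t, ‖s t‖ ^ r * ‖s t (φ (s t))‖ ∂μ :=
          MeasureTheory.integral_mono
            (s.map fun c => θ * ‖c‖ ^ q.toReal).integrable_of_isFiniteMeasure
            (s.map fun c : StrongDual 𝕜 Y => ‖c‖ ^ r * ‖c (φ c)‖).integrable_of_isFiniteMeasure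
            hv_ge
      _ ≤ |∫ t, ‖s t‖ ^ r * ‖s t (φ (s t))‖ ∂μ| := le_abs_self _
      _ = ‖∫ t, s t (v t) ∂μ‖ := by simp_rw [hv_apply, integral_ofReal, RCLike.norm_ofReal]

theorem SimpleFunc.exists_eLpNorm_le_one_le_norm_integral_apply
    (s : SimpleFunc α (StrongDual 𝕜 Y)) (hq : q ≠ ∞) {r : ℝ}
    (hr : r < (eLpNorm s q μ).toReal) :
    ∃ u : α → Y, MemLp u p μ ∧ eLpNorm u p μ ≤ 1 ∧ r ≤ ‖∫ t, s t (u t) ∂μ‖ := by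
  rcases le_or_gt r 0 with hr₀ | hr₀
  · exact ⟨0, .zero, by simp, by simpa using hr₀⟩
  set N := (eLpNorm s q μ).toReal
  have hN : 0 < N := hr₀.trans hr
  obtain ⟨v, hv, hv_norm, hv_ge⟩ := s.exists_eLpNorm_le_and_mul_le_norm_integral_apply
    (μ := μ) (p := p) hq ((div_lt_one hN).mpr hr)
  have hvB : eLpNorm v p μ ≤ ENNReal.ofReal (N ^ (q.toReal - 1)) := by
    have hq₁ : 0 ≤ q.toReal - 1 := by
      simpa using ENNReal.toReal_mono hq (ENNReal.HolderConjugate.one_le q p)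
    rwa [← ENNReal.ofReal_rpow_of_nonneg hN.le hq₁,
      ENNReal.ofReal_toReal (s.memLp_of_isFiniteMeasure q μ).eLpNorm_ne_top]
  obtain ⟨u, hu, hu_norm, hu_eq⟩ :=
    hv.exists_eLpNorm_le_one_norm_integral_apply_eq_div s (Real.rpow_pos_of_pos hN _) hvB
  refine ⟨u, hu, hu_norm, ?_⟩
  rw [hu_eq, le_div_iff₀ (Real.rpow_pos_of_pos hN _)]
  calc r * N ^ (q.toReal - 1) = r / N * N ^ q.toReal := by
        rw [Real.rpow_sub_one hN.ne']
        field_simp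
    _ ≤ _ := hv_ge

theorem MemLp.exists_eLpNorm_le_one_lt_norm_integral_apply (hg : MemLp g q μ) (hq : q ≠ ∞)
    {r : ℝ} (hr : r < (eLpNorm g q μ).toReal) :
    ∃ u : α → Y, MemLp u p μ ∧ eLpNorm u p μ ≤ 1 ∧ r < ‖∫ t, g t (u t) ∂μ‖ := by
  set η := ((eLpNorm g q μ).toReal - r) / 2
  have hη : 0 < η := by simp only [η]; linarith
  obtain ⟨s, hgs, hs⟩ := hg.exists_simpleFunc_eLpNorm_sub_lt hq (ENNReal.ofReal_pos.mpr hη).ne'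
  have hgs' : (eLpNorm (g - ⇑s) q μ).toReal < η := ENNReal.toReal_lt_of_lt_ofReal hgs
  have hs_norm : r + η < (eLpNorm s q μ).toReal := by
    have htri : eLpNorm g q μ ≤ eLpNorm (g - ⇑s) q μ + eLpNorm s q μ := by
      simpa using eLpNorm_add_le (hg.sub hs).1 hs.1 (ENNReal.HolderConjugate.one_le q p)
    have htri' := ENNReal.toReal_le_add htri (hg.sub hs).eLpNorm_ne_top hs.eLpNorm_ne_top
    simp only [η] at hgs' ⊢
    linarith
  obtain ⟨u, hu, hu₁, hsu⟩ := s.exists_eLpNorm_le_one_le_norm_integral_apply (p := p) hq hs_norm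
  have hsplit : ∫ t, g t (u t) ∂μ = ∫ t, s t (u t) ∂μ + ∫ t, (g - ⇑s) t (u t) ∂μ := by
    rw [← integral_add (hs.integrable_apply hu) ((hg.sub hs).integrable_apply hu)]
    simp
  have herr : ‖∫ t, (g - ⇑s) t (u t) ∂μ‖ < η :=
    (norm_integral_apply_le_of_eLpNorm_le_one (hg.sub hs) hu hu₁).trans_lt hgs'
  refine ⟨u, hu, hu₁, ?_⟩
  calc r < ‖∫ t, s t (u t) ∂μ‖ - ‖∫ t, (g - ⇑s) t (u t) ∂μ‖ := by linarith
    _ ≤ ‖∫ t, g t (u t) ∂μ‖ := by rw [hsplit]; exact norm_sub_le_norm_add _ _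

theorem MemLp.toReal_eLpNorm_eq_sSup_norm_integral_apply (hg : MemLp g q μ) (hq : q ≠ ∞) :
    (eLpNorm g q μ).toReal = sSup {r : ℝ | ∃ u : α → Y, MemLp u p μ ∧ eLpNorm u p μ ≤ 1 ∧
      r = ‖∫ t, g t (u t) ∂μ‖} := by
  refine (csSup_eq_of_forall_le_of_forall_lt_exists_gt ?_ ?_ ?_).symm
  · exact ⟨0, 0, .zero, by simp, by simp⟩
  · rintro _ ⟨u, hu, hu₁, rfl⟩
    exact norm_integral_apply_le_of_eLpNorm_le_one hg hu hu₁
  · intro r hr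
    obtain ⟨u, hu, hu₁, hru⟩ := hg.exists_eLpNorm_le_one_lt_norm_integral_apply (p := p) hq hr
    exact ⟨_, ⟨u, hu, hu₁, rfl⟩, hru⟩

end HolderConjugate

end MeasureTheory

theorem Lp_dual_norming_general {𝕜 Y : Type*} [RCLike 𝕜] [NormedAddCommGroup Y]
    [NormedSpace 𝕜 Y]
    {p q : ℝ≥0∞} (hpq : p⁻¹ + q⁻¹ = 1) (hq : q ≠ ⊤) {τ : ℝ}
    (g : ℝ → StrongDual 𝕜 Y)
    (hg : MemLp g q (volume.restrict (Set.Ioc 0 τ))) :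
    (eLpNorm g q (volume.restrict (Set.Ioc 0 τ))).toReal =
      sSup {r : ℝ | ∃ u : ℝ → Y,
        MemLp u p (volume.restrict (Set.Ioc 0 τ)) ∧
        eLpNorm u p (volume.restrict (Set.Ioc 0 τ)) ≤ 1 ∧
        r = ‖∫ t, (g t) (u t) ∂(volume.restrict (Set.Ioc 0 τ))‖} := by
  have : ENNReal.HolderConjugate p q := ENNReal.holderConjugate_iff.mpr hpq
  exact hg.toReal_eLpNorm_eq_sSup_norm_integral_apply hq

/-- the norming property of vector-valued `L^p`-duality.  Let `Y` be a
Banach space, `p, q ∈ [1,∞]` Hölder conjugates with `q < ∞`, and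
`g ∈ L^q([0,τ], Y')`.  Then
`‖g‖_{L^q} = sup{ |∫₀^τ ⟨u(t), g(t)⟩ dt| : u ∈ L^p([0,τ], Y), ‖u‖_{L^p} ≤ 1 }`. -/
theorem Lp_dual_norming {𝕜 Y : Type*} [RCLike 𝕜] [NormedAddCommGroup Y]
    [NormedSpace 𝕜 Y] [CompleteSpace Y]
    {p q : ℝ≥0∞} (hpq : p⁻¹ + q⁻¹ = 1) (hq : q ≠ ⊤) {τ : ℝ} (hτ : 0 < τ)
    (g : ℝ → StrongDual 𝕜 Y)
    (hg : MemLp g q (volume.restrict (Set.Ioc 0 τ))) :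
    (eLpNorm g q (volume.restrict (Set.Ioc 0 τ))).toReal =
      sSup {r : ℝ | ∃ u : ℝ → Y,
        MemLp u p (volume.restrict (Set.Ioc 0 τ)) ∧
        eLpNorm u p (volume.restrict (Set.Ioc 0 τ)) ≤ 1 ∧
        r = ‖∫ t, (g t) (u t) ∂(volume.restrict (Set.Ioc 0 τ))‖} :=
  Lp_dual_norming_general hpq hq g hg
end

section
/- In an ordered Banach space Y whose norm is additive on the positive cone (‖x+y‖ = ‖x‖+‖y‖ for x, y ≥ 0) and whose cone is generating and normal, the dual space Y' has an order unit: there exists e ∈ Y'_+ such that Y' = ⋃_{λ>0} [−λe, λe]. Consequently the positive cone of Y' is generating: every element of Y' is a difference of two positive functionals. -/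
/-!
Additivity of the norm on the cone makes `‖a‖ - ‖b‖` depend only on `a - b` for `a, b ∈ C`,
so, the cone being generating, the norm on `C` extends to an additive functional `e` on `Y`
with `|e (a - b)| ≤ ‖a - b‖`; being Lipschitz it is continuous, hence real-linear.
For `x ∈ C` every `φ ∈ Y'` satisfies `|φ x| ≤ ‖φ‖ ‖x‖ = ‖φ‖ e x`, so `e` is an order unit of `Y'`,
and `φ = (φ + l e) - l e` splits `φ` into positive functionals.
-/

section ConeNorm

variable {Y : Type*} [SeminormedAddCommGroup Y] {C : Set Y}

theorem norm_sub_norm_eq_of_sub_eq (hnorm_add : ∀ x ∈ C, ∀ y ∈ C, ‖x + y‖ = ‖x‖ + ‖y‖)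
    {a b a' b' : Y} (ha : a ∈ C) (hb : b ∈ C) (ha' : a' ∈ C) (hb' : b' ∈ C)
    (h : a - b = a' - b') : ‖a‖ - ‖b‖ = ‖a'‖ - ‖b'‖ := by
  have h₁ := hnorm_add a ha b' hb'
  rw [sub_eq_sub_iff_add_eq_add.mp h, hnorm_add a' ha' b hb] at h₁
  linarith

theorem exists_addMonoidHom_eq_norm_on (hadd : ∀ x ∈ C, ∀ y ∈ C, x + y ∈ C)
    (hgen : ∀ y : Y, ∃ a ∈ C, ∃ b ∈ C, y = a - b)
    (hnorm_add : ∀ x ∈ C, ∀ y ∈ C, ‖x + y‖ = ‖x‖ + ‖y‖) :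
    ∃ f : Y →+ ℝ, (∀ y, ‖f y‖ ≤ ‖y‖) ∧ ∀ x ∈ C, f x = ‖x‖ := by
  choose pos hpos neg hneg hdec using hgen
  have hwd : ∀ {a b : Y}, a ∈ C → b ∈ C → ‖pos (a - b)‖ - ‖neg (a - b)‖ = ‖a‖ - ‖b‖ :=
    fun ha hb => norm_sub_norm_eq_of_sub_eq hnorm_add (hpos _) (hneg _) ha hb (hdec _).symm
  let f : Y →+ ℝ := AddMonoidHom.mk' (fun y => ‖pos y‖ - ‖neg y‖) fun y z => by
    have hyz : pos y + pos z - (neg y + neg z) = y + z := by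
      rw [add_sub_add_comm, ← hdec, ← hdec]
    have := hwd (hadd _ (hpos y) _ (hpos z)) (hadd _ (hneg y) _ (hneg z))
    rw [hyz, hnorm_add _ (hpos y) _ (hpos z), hnorm_add _ (hneg y) _ (hneg z)] at this
    linarith
  refine ⟨f, fun y => ?_, fun x hx => ?_⟩
  · calc ‖f y‖ = |‖pos y‖ - ‖neg y‖| := rfl
      _ ≤ ‖pos y - neg y‖ := abs_norm_sub_norm_le _ _
      _ = ‖y‖ := by rw [← hdec]
  · have := hwd (hadd x hx x hx) hx
    rw [add_sub_cancel_right, hnorm_add x hx x hx] at this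
    change ‖pos x‖ - ‖neg x‖ = ‖x‖
    linarith

theorem exists_strongDual_eq_norm_on [NormedSpace ℝ Y] (hadd : ∀ x ∈ C, ∀ y ∈ C, x + y ∈ C)
    (hgen : ∀ y : Y, ∃ a ∈ C, ∃ b ∈ C, y = a - b)
    (hnorm_add : ∀ x ∈ C, ∀ y ∈ C, ‖x + y‖ = ‖x‖ + ‖y‖) :
    ∃ e : StrongDual ℝ Y, ∀ x ∈ C, e x = ‖x‖ := by
  obtain ⟨f, hbound, hf⟩ := exists_addMonoidHom_eq_norm_on hadd hgen hnorm_add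
  have hcont : Continuous f := AddMonoidHomClass.continuous_of_bound f 1 (by simpa using hbound)
  exact ⟨f.toRealLinearMap hcont, hf⟩

theorem abs_apply_le_opNorm_mul_of_eq_norm_on [NormedSpace ℝ Y] {e : StrongDual ℝ Y}
    (he : ∀ x ∈ C, e x = ‖x‖) (φ : StrongDual ℝ Y) {x : Y} (hx : x ∈ C) :
    |φ x| ≤ ‖φ‖ * e x :=
  he x hx ▸ φ.le_opNorm x

end ConeNorm

theorem dual_order_unit_of_additive_norm_general {Y : Type*} [NormedAddCommGroup Y]
    [NormedSpace ℝ Y] (C : Set Y)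
    (hadd : ∀ x ∈ C, ∀ y ∈ C, x + y ∈ C)
    (hgen : ∀ y : Y, ∃ a ∈ C, ∃ b ∈ C, y = a - b)
    (hnorm_add : ∀ x ∈ C, ∀ y ∈ C, ‖x + y‖ = ‖x‖ + ‖y‖) :
    (∃ e : StrongDual ℝ Y, (∀ x ∈ C, 0 ≤ e x) ∧
      ∀ φ : StrongDual ℝ Y, ∃ l : ℝ, 0 < l ∧
        (∀ x ∈ C, 0 ≤ (l • e - φ) x) ∧ (∀ x ∈ C, 0 ≤ (φ + l • e) x)) ∧
    (∀ φ : StrongDual ℝ Y, ∃ ψ₁ ψ₂ : StrongDual ℝ Y,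
      (∀ x ∈ C, 0 ≤ ψ₁ x) ∧ (∀ x ∈ C, 0 ≤ ψ₂ x) ∧ φ = ψ₁ - ψ₂) := by
  obtain ⟨e, he⟩ := exists_strongDual_eq_norm_on hadd hgen hnorm_add
  have hepos : ∀ x ∈ C, 0 ≤ e x := fun x hx => he x hx ▸ norm_nonneg x
  have hunit : ∀ φ : StrongDual ℝ Y, ∃ l : ℝ, 0 < l ∧
      (∀ x ∈ C, 0 ≤ (l • e - φ) x) ∧ (∀ x ∈ C, 0 ≤ (φ + l • e) x) := by
    intro φ
    refine ⟨‖φ‖ + 1, by positivity, fun x hx => ?_, fun x hx => ?_⟩ <;>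
    · have hφ := abs_le.mp (abs_apply_le_opNorm_mul_of_eq_norm_on he φ hx)
      simp only [sub_apply, add_apply, smul_apply, smul_eq_mul]
      linarith [hepos x hx]
  refine ⟨⟨e, hepos, hunit⟩, fun φ => ?_⟩
  obtain ⟨l, hl, -, hφl⟩ := hunit φ
  exact ⟨φ + l • e, l • e, hφl, fun x hx => mul_nonneg hl.le (hepos x hx), by abel⟩

/-- let `Y` be an ordered Banach space whose closed positive cone `C` is
generating and normal, and whose norm is additive on the cone.  Then the dual `Y'` has
an order unit `e` for the dual cone: `Y' = ⋃_{λ>0} [−λe, λe]`, and consequently the dual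
cone is generating. -/
theorem dual_order_unit_of_additive_norm {Y : Type*} [NormedAddCommGroup Y]
    [NormedSpace ℝ Y] [CompleteSpace Y] (C : Set Y)
    (hclosed : IsClosed C)
    (hadd : ∀ x ∈ C, ∀ y ∈ C, x + y ∈ C)
    (hsmul : ∀ r : ℝ, 0 ≤ r → ∀ x ∈ C, r • x ∈ C)
    (hpointed : C ∩ (-C) = {0})
    (hgen : ∀ y : Y, ∃ a ∈ C, ∃ b ∈ C, y = a - b)
    (hnormal : ∃ M : ℝ, 1 ≤ M ∧ ∀ x y : Y, x ∈ C → y - x ∈ C → ‖x‖ ≤ M * ‖y‖)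
    (hnorm_add : ∀ x ∈ C, ∀ y ∈ C, ‖x + y‖ = ‖x‖ + ‖y‖) :
    (∃ e : StrongDual ℝ Y, (∀ x ∈ C, 0 ≤ e x) ∧
      ∀ φ : StrongDual ℝ Y, ∃ l : ℝ, 0 < l ∧
        (∀ x ∈ C, 0 ≤ (l • e - φ) x) ∧ (∀ x ∈ C, 0 ≤ (φ + l • e) x)) ∧
    (∀ φ : StrongDual ℝ Y, ∃ ψ₁ ψ₂ : StrongDual ℝ Y,
      (∀ x ∈ C, 0 ≤ ψ₁ x) ∧ (∀ x ∈ C, 0 ≤ ψ₂ x) ∧ φ = ψ₁ - ψ₂) :=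
  dual_order_unit_of_additive_norm_general C hadd hgen hnorm_add
end
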